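/- For the A_{2n}^{(1)} system, the coordinate change q_i = f_{2i}, p_i = f_1 + f_3 + ... + f_{2i-1} (i = 1,...,n), x = f_0 + f_1 + ... + f_{2n} is invertible, with inverse f_0 = x - q_1 - ... - q_n - p_n, f_{2i} = q_i, f_1 = p_1, f_{2i+1} = p_{i+1} - p_i (1 ≤ i ≤ n-1), and the new coordinates satisfy {p_i, q_j} = δ_{ij}, {q_i, q_j} = {p_i, p_j} = {p_i, x} = {q_i, x} = 0 with respect to the Poisson bracket {φ,ψ} = Σ (∂φ/∂f_i) u_{ij} (∂ψ/∂f_j), u_{i,i±1} = ±1 (indices mod 2n+1). -/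

import Mathlib

open MvPolynomial
open Fin.NatCast

noncomputable section

/-- The ring `ℂ(α)[f₀,…,f_{2n}]`: polynomials in the `f` variables over the field
`ℂ(α₀,…,α_{2n})` of rational functions in the parameters. -/
abbrev Rn (n : ℕ) : Type :=
  MvPolynomial (Fin (2*n+1)) (FractionRing (MvPolynomial (Fin (2*n+1)) ℂ))

def fn (n : ℕ) (i : Fin (2*n+1)) : Rn n := X i

/-- The matrix `U` mod `2n+1`. -/
def un (n : ℕ) (i j : Fin (2*n+1)) : Rn n :=
  if j = i + 1 then 1 else if j = i - 1 then -1 else 0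

/-- The Poisson bracket `{φ,ψ} = Σ_{i,j} (∂φ/∂f_i) u_{ij} (∂ψ/∂f_j)`. -/
def pbn (n : ℕ) (φ ψ : Rn n) : Rn n :=
  ∑ i : Fin (2*n+1), ∑ j : Fin (2*n+1), pderiv i φ * un n i j * pderiv j ψ

/-- `q_i = f_{2i}` (`i = 1,…,n`, encoded 0-based). -/
def qn (n : ℕ) (i : Fin n) : Rn n := fn n ((2*i.val+2 : ℕ) : Fin (2*n+1))

/-- `p_i = f₁ + f₃ + ⋯ + f_{2i-1}` (`i = 1,…,n`, encoded 0-based). -/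
def pn (n : ℕ) (i : Fin n) : Rn n :=
  ∑ r ∈ Finset.range (i.val+1), fn n ((2*r+1 : ℕ) : Fin (2*n+1))

/-- `x = f₀ + f₁ + ⋯ + f_{2n}`. -/
def xn (n : ℕ) : Rn n := ∑ i : Fin (2*n+1), fn n i

/-!
Every new coordinate is a sum of generators `f_k`, so by bilinearity all brackets reduce to
entries of `U`. The indices occurring in `p` and `q` are all nonzero, which keeps every pair away
from the wrap-around entries `u_{0,2n}`, `u_{2n,0}`: there `U` is the tridiagonal matrix, and
`{p_i, q_j}` telescopes to `δ_{ij}` while brackets of equal parity vanish. Finally `x` is a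
Casimir because every row of `U` sums to zero.
-/

open Finset

lemma sum_range_two_mul_add_one {M : Type*} [AddCommMonoid M] (g : ℕ → M) (n : ℕ) :
    ∑ k ∈ range (2*n+1), g k = g 0 + ∑ r ∈ range n, g (2*r+1) + ∑ r ∈ range n, g (2*r+2) := by
  induction n with
  | zero => simp
  | succ m ih =>
    rw [show 2*(m+1)+1 = 2*m+1+1+1 by ring, sum_range_succ, sum_range_succ, ih,
      sum_range_succ (fun r => g (2*r+1)), sum_range_succ (fun r => g (2*r+2))]
    abel

lemma Fin.natCast_eq_natCast_add_one_iff {k a b : ℕ} (ha : a ≤ k) (hb₀ : 0 < b) (hb : b ≤ k) :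
    (b : Fin (k+1)) = (a : Fin (k+1)) + 1 ↔ b = a + 1 := by
  rw [← Nat.cast_succ, Fin.ext_iff, Fin.val_cast_of_lt (by omega), Fin.val_natCast]
  rcases (show a + 1 < k + 1 ∨ a + 1 = k + 1 by omega) with h | h
  · rw [Nat.mod_eq_of_lt h]
  · rw [Nat.succ_eq_add_one, h, Nat.mod_self]; omega

section

variable {n : ℕ}

lemma un_natCast_of_pos {a b : ℕ} (ha₀ : 0 < a) (ha : a < 2*n+1) (hb₀ : 0 < b) (hb : b < 2*n+1) :
    un n a b = if b = a + 1 then 1 else if a = b + 1 then -1 else 0 := by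
  simp only [un, eq_sub_iff_add_eq, eq_comm (a := (b : Fin (2*n+1)) + 1),
    Fin.natCast_eq_natCast_add_one_iff (k := 2*n) (a := a) (by omega) hb₀ (by omega),
    Fin.natCast_eq_natCast_add_one_iff (k := 2*n) (a := b) (by omega) ha₀ (by omega)]

lemma sum_un_eq_zero (hn : 1 ≤ n) (a : Fin (2*n+1)) : ∑ j, un n a j = 0 := by
  have hne : a + 1 ≠ a - 1 := by
    have h2 : a + 1 - (a - 1) = ((2 : ℕ) : Fin (2*n+1)) := by
      rw [sub_sub_eq_add_sub, add_assoc, add_sub_cancel_left, one_add_one_eq_two]; rfl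
    rw [Ne, ← sub_eq_zero, h2, Fin.ext_iff, Fin.val_cast_of_lt (by omega)]
    simp
  rw [Fintype.sum_eq_add (a + 1) (a - 1) hne]
  · simp [un, hne.symm]
  · rintro j ⟨h₁, h₂⟩
    simp [un, h₁, h₂]

lemma pbn_fn_fn (a b : Fin (2*n+1)) : pbn n (fn n a) (fn n b) = un n a b := by
  classical
  simp [pbn, fn, Pi.single_apply, ite_mul, mul_ite, sum_ite_eq]

lemma pbn_sum_left {ι : Type*} (s : Finset ι) (φ : ι → Rn n) (ψ : Rn n) :
    pbn n (∑ a ∈ s, φ a) ψ = ∑ a ∈ s, pbn n (φ a) ψ := by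
  simp only [pbn, map_sum, sum_mul]
  rw [sum_congr rfl fun i _ => sum_comm, sum_comm]

lemma pbn_sum_right {ι : Type*} (s : Finset ι) (φ : Rn n) (ψ : ι → Rn n) :
    pbn n φ (∑ a ∈ s, ψ a) = ∑ a ∈ s, pbn n φ (ψ a) := by
  simp only [pbn, map_sum, mul_sum]
  rw [sum_congr rfl fun i _ => sum_comm, sum_comm]

lemma pbn_xn (hn : 1 ≤ n) (φ : Rn n) : pbn n φ (xn n) = 0 := by
  have hx : ∀ j, pderiv j (xn n) = 1 := by
    intro j
    simp [xn, fn, pderiv_X]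
  simp only [pbn, hx, mul_one, ← mul_sum, sum_un_eq_zero hn, mul_zero, sum_const_zero]

lemma xn_eq_sum_range : xn n = fn n 0 + ∑ r ∈ range n, fn n ((2*r+1 : ℕ) : Fin (2*n+1))
    + ∑ r ∈ range n, fn n ((2*r+2 : ℕ) : Fin (2*n+1)) := by
  rw [← Nat.cast_zero, ← sum_range_two_mul_add_one (fun k => fn n (k : Fin (2*n+1))),
    ← Fin.sum_univ_eq_sum_range, xn]
  simp only [Fin.cast_val_eq_self]

lemma pbn_pn_qn (i j : Fin n) : pbn n (pn n i) (qn n j) = if i = j then 1 else 0 := by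
  have hi := i.isLt; have hj := j.isLt
  have h_gen : ∀ r ∈ range (i.val+1), pbn n (fn n ((2*r+1 : ℕ) : Fin (2*n+1))) (qn n j) =
      (if r = j.val then 1 else 0) - (if r = j.val+1 then 1 else 0) := by
    intro r hr
    rw [mem_range] at hr
    rw [qn, pbn_fn_fn, un_natCast_of_pos (by omega) (by omega) (by omega) (by omega)]
    split_ifs <;> first | omega | simp
  rw [pn, pbn_sum_left, sum_congr rfl h_gen, sum_sub_distrib, sum_ite_eq', sum_ite_eq']
  simp only [mem_range, Fin.ext_iff]
  split_ifs <;> first | omega | simp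

lemma pbn_qn_qn (i j : Fin n) : pbn n (qn n i) (qn n j) = 0 := by
  have hi := i.isLt; have hj := j.isLt
  rw [qn, qn, pbn_fn_fn, un_natCast_of_pos (by omega) (by omega) (by omega) (by omega),
    if_neg (by omega), if_neg (by omega)]

lemma pbn_pn_pn (i j : Fin n) : pbn n (pn n i) (pn n j) = 0 := by
  have hi := i.isLt; have hj := j.isLt
  rw [pn, pbn_sum_left]
  refine sum_eq_zero fun r hr => ?_
  rw [pn, pbn_sum_right]
  refine sum_eq_zero fun s hs => ?_
  rw [mem_range] at hr hs
  rw [pbn_fn_fn, un_natCast_of_pos (by omega) (by omega) (by omega) (by omega),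
    if_neg (by omega), if_neg (by omega)]

end

/-- The coordinate change `(f) ↦ (q; p; x)` is invertible, with the stated inverse, and
the new coordinates are canonical for the Poisson bracket. -/
theorem stmt16 (n : ℕ) (hn : 1 ≤ n) :
    (fn n 0 = xn n - (∑ i : Fin n, qn n i) - pn n ⟨n-1, by omega⟩) ∧
    (fn n 1 = pn n ⟨0, by omega⟩) ∧
    (∀ i : Fin n, fn n ((2*i.val+2 : ℕ) : Fin (2*n+1)) = qn n i) ∧
    (∀ i : ℕ, ∀ h : i + 1 < n,
      fn n ((2*i+3 : ℕ) : Fin (2*n+1)) = pn n ⟨i+1, h⟩ - pn n ⟨i, by omega⟩) ∧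
    (∀ i j : Fin n, pbn n (pn n i) (qn n j) = if i = j then 1 else 0) ∧
    (∀ i j : Fin n, pbn n (qn n i) (qn n j) = 0) ∧
    (∀ i j : Fin n, pbn n (pn n i) (pn n j) = 0) ∧
    (∀ i : Fin n, pbn n (pn n i) (xn n) = 0) ∧
    (∀ i : Fin n, pbn n (qn n i) (xn n) = 0) := by
  have hp : pn n ⟨n-1, by omega⟩ = ∑ r ∈ range n, fn n ((2*r+1 : ℕ) : Fin (2*n+1)) := by
    simp only [pn, Nat.sub_add_cancel hn]
  have hq : ∑ i : Fin n, qn n i = ∑ r ∈ range n, fn n ((2*r+2 : ℕ) : Fin (2*n+1)) :=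
    Fin.sum_univ_eq_sum_range (fun r => fn n ((2*r+2 : ℕ) : Fin (2*n+1))) n
  refine ⟨?_, by simp [pn], fun i => rfl, fun i h => ?_, pbn_pn_qn, pbn_qn_qn, pbn_pn_pn,
    fun i => pbn_xn hn _, fun i => pbn_xn hn _⟩
  · rw [xn_eq_sum_range, hp, hq]
    abel
  · rw [pn, pn, sum_range_succ, add_sub_cancel_left]
    rfl
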